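/- Under the same hypotheses on p (measurable, symmetric, positive a.e., normalized), the kernel of the operator L on L²(S^d) consists exactly of the constant functions; i.e., Lφ = 0 (a.e.) implies φ is a.e. equal to its mean ⟨φ⟩ = (1/|S^d|)∫ φ dω. -/

import Mathlib

/-!
Multiplying `Lφ` by `φ`, integrating, and symmetrising with `p ω ω' = p ω' ω` gives the Dirichlet
form identity `∬ p(ω, ω') (φ ω - φ ω')² = 2 ∫ φ · Lφ`, all integrals being finite because
`∫ p(ω, ·) = 1` and `φ ∈ L²`. Hence `Lφ = 0` forces `φ ω = φ ω'` for almost every pair (as `p > 0`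
a.e.), so `φ` is a.e. constant and equals its average. The sphere has finite `d`-dimensional
Hausdorff measure because it is covered by finitely many caps, each the image of a ball of the
hyperplane `vᗮ` under the Lipschitz map `y ↦ (v + y) / ‖v + y‖`.
-/

open MeasureTheory Metric Set
noncomputable section

/-- The unit sphere `S^d` lives in `E = ℝ^{d+1}` (Euclidean space). -/
abbrev Esp (d : ℕ) := EuclideanSpace ℝ (Fin (d+1))

/-- The surface measure on the unit sphere `S^d ⊂ ℝ^{d+1}`:
the `d`-dimensional Hausdorff measure restricted to the sphere. -/
noncomputable def sphμ (d : ℕ) : Measure (Esp d) := (μH[(d : ℝ)]).restrict (Metric.sphere 0 1)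

open Filter Module NormedSpace
open scoped InnerProductSpace

section SphereMeasure

lemma lipschitzOnWith_normalize {V : Type*} [NormedAddCommGroup V] [NormedSpace ℝ V] :
    LipschitzOnWith 2 (normalize : V → V) {x | 1 ≤ ‖x‖} := by
  refine LipschitzOnWith.of_dist_le_mul fun x (hx : 1 ≤ ‖x‖) y _ => ?_
  have hx0 : ‖x‖ ≠ 0 := by positivity
  have hsplit : normalize x - normalize y = ‖x‖⁻¹ • ((x - y) + (‖y‖ - ‖x‖) • normalize y) := by
    rw [sub_smul, norm_smul_normalize, smul_add, smul_sub, smul_sub, smul_smul,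
      inv_mul_cancel₀ hx0, one_smul, NormedSpace.normalize]
    abel
  have hy : ‖normalize y‖ ≤ 1 := by
    by_cases hy0 : y = 0
    · simp [hy0]
    · exact (norm_normalize_eq_one_iff.2 hy0).le
  rw [dist_eq_norm, dist_eq_norm, hsplit, norm_smul, norm_inv, norm_norm]
  calc ‖x‖⁻¹ * ‖x - y + (‖y‖ - ‖x‖) • normalize y‖
      ≤ 1 * (‖x - y‖ + ‖x - y‖ * 1) := by
        gcongr
        · exact inv_le_one_of_one_le₀ hx
        · refine (norm_add_le _ _).trans ?_
          rw [norm_smul, Real.norm_eq_abs, abs_sub_comm]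
          gcongr
          exact abs_norm_sub_norm_le x y
    _ = 2 * ‖x - y‖ := by ring

variable {E : Type*} [NormedAddCommGroup E] [InnerProductSpace ℝ E]

lemma sphere_inter_cap_subset_image {v : E} (hv : ‖v‖ = 1) :
    sphere (0 : E) 1 ∩ {x | 1 / 2 < ⟪x, v⟫_ℝ} ⊆
      (fun y : (ℝ ∙ v)ᗮ => normalize (v + y)) '' closedBall 0 3 := by
  rintro x ⟨hx, hxv : 1 / 2 < ⟪x, v⟫_ℝ⟩
  rw [mem_sphere_zero_iff_norm] at hx
  set t := ⟪x, v⟫_ℝ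
  have ht : 0 < t := lt_trans (by norm_num) hxv
  have hy : t⁻¹ • x - v ∈ (ℝ ∙ v)ᗮ := by
    rw [Submodule.mem_orthogonal_singleton_iff_inner_right, inner_sub_right, inner_smul_right,
      real_inner_comm, real_inner_self_eq_norm_sq, hv, inv_mul_cancel₀ ht.ne']
    norm_num
  refine ⟨⟨_, hy⟩, ?_, ?_⟩
  · rw [mem_closedBall_zero_iff, Submodule.coe_norm]
    calc ‖t⁻¹ • x - v‖ ≤ t⁻¹ * ‖x‖ + ‖v‖ := by
          rw [← norm_smul_of_nonneg (inv_nonneg.2 ht.le)]; exact norm_sub_le _ _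
      _ ≤ 2 * 1 + 1 := by
          rw [hx, hv]
          gcongr
          rw [inv_le_comm₀ ht two_pos]
          linarith
      _ = 3 := by norm_num
  · simp only [add_sub_cancel, normalize_smul_of_pos (inv_pos.2 ht),
      normalize_eq_self_of_norm_eq_one hx]

variable [FiniteDimensional ℝ E] [MeasurableSpace E] [BorelSpace E] {d : ℕ}

lemma hausdorffMeasure_sphere_inter_cap_lt_top (hd : finrank ℝ E = d + 1) {v : E}
    (hv : ‖v‖ = 1) : μH[d] (sphere (0 : E) 1 ∩ {x | 1 / 2 < ⟪x, v⟫_ℝ}) < ⊤ := by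
  have : Fact (finrank ℝ E = d + 1) := ⟨hd⟩
  have hK : finrank ℝ (ℝ ∙ v)ᗮ = d :=
    Submodule.finrank_orthogonal_span_singleton (ne_zero_of_norm_ne_zero (hv ▸ one_ne_zero))
  have hlip : LipschitzOnWith 2 (fun y : (ℝ ∙ v)ᗮ => normalize (v + y)) univ := by
    have hshift : LipschitzOnWith 1 (fun y : (ℝ ∙ v)ᗮ => v + y) univ :=
      LipschitzOnWith.of_dist_le_mul fun y _ z _ => by simp [dist_add_left, Subtype.dist_eq]
    have hmaps : MapsTo (fun y : (ℝ ∙ v)ᗮ => v + (y : E)) univ {x | 1 ≤ ‖x‖} := fun y _ => by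
      have hpyth := norm_add_sq_eq_norm_sq_add_norm_sq_of_inner_eq_zero v (y : E)
        (Submodule.mem_orthogonal_singleton_iff_inner_right.1 y.2)
      change 1 ≤ ‖v + (y : E)‖
      rw [hv] at hpyth
      nlinarith [norm_nonneg (v + (y : E)), mul_self_nonneg ‖(y : E)‖]
    simpa only [mul_one, Function.comp_def] using lipschitzOnWith_normalize.comp hshift hmaps
  calc μH[d] (sphere (0 : E) 1 ∩ {x | 1 / 2 < ⟪x, v⟫_ℝ})
      ≤ μH[d] ((fun y : (ℝ ∙ v)ᗮ => normalize (v + y)) '' closedBall 0 3) :=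
        measure_mono (sphere_inter_cap_subset_image hv)
    _ ≤ 2 ^ (d : ℝ) * μH[d] (closedBall (0 : (ℝ ∙ v)ᗮ) 3) :=
        (hlip.mono (subset_univ _)).hausdorffMeasure_image_le (Nat.cast_nonneg d)
    _ < ⊤ := by
        refine ENNReal.mul_lt_top (by simp) ?_
        rw [← hK]
        exact measure_closedBall_lt_top

theorem hausdorffMeasure_sphere_lt_top (hd : finrank ℝ E = d + 1) :
    μH[d] (sphere (0 : E) 1) < ⊤ := by
  refine (isCompact_sphere 0 1).measure_lt_top_of_nhdsWithin fun v hv => ?_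
  have hv1 : ‖v‖ = 1 := mem_sphere_zero_iff_norm.1 hv
  have hcap : {x | 1 / 2 < ⟪x, v⟫_ℝ} ∈ nhds v := by
    refine (isOpen_lt continuous_const (continuous_id.inner continuous_const)).mem_nhds ?_
    change 1 / 2 < ⟪v, v⟫_ℝ
    rw [real_inner_self_eq_norm_sq, hv1]
    norm_num
  exact ⟨_, inter_mem_nhdsWithin _ hcap, hausdorffMeasure_sphere_inter_cap_lt_top hd hv1⟩

end SphereMeasure

instance isFiniteMeasure_sphμ (d : ℕ) : IsFiniteMeasure (sphμ d) :=
  ⟨by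
    rw [sphμ, Measure.restrict_apply_univ]
    exact hausdorffMeasure_sphere_lt_top finrank_euclideanSpace_fin⟩

lemma kernel_mul_sub_sq_eq {α : Type*} {p : α → α → ℝ} {φ : α → ℝ}
    (hsymm : ∀ x y, p x y = p y x) (x y : α) :
    p x y * (φ x - φ y) ^ 2 = φ x * (p x y * (φ x - φ y)) + φ y * (p y x * (φ y - φ x)) := by
  rw [hsymm y x]
  ring

section ScatteringOperator

variable {α : Type*} [MeasurableSpace α] {μ : Measure α} {p : α → α → ℝ} {φ : α → ℝ}

def scatteringOp (μ : Measure α) (p : α → α → ℝ) (φ : α → ℝ) (x : α) : ℝ :=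
  ∫ y, p x y * (φ x - φ y) ∂μ

variable [SFinite μ]

lemma integrable_kernel_mul_sq_fst (hmeas : AEStronglyMeasurable (Function.uncurry p) (μ.prod μ))
    (hp : ∀ᵐ w ∂μ.prod μ, 0 ≤ p w.1 w.2) (hnorm : ∀ᵐ x ∂μ, ∫ y, p x y ∂μ = 1)
    (hφ : MemLp φ 2 μ) : Integrable (fun w : α × α => p w.1 w.2 * φ w.1 ^ 2) (μ.prod μ) := by
  have hsm : AEStronglyMeasurable (fun w : α × α => p w.1 w.2 * φ w.1 ^ 2) (μ.prod μ) :=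
    hmeas.mul (hφ.1.comp_fst.pow 2)
  refine (integrable_prod_iff hsm).2 ⟨?_, ?_⟩
  · filter_upwards [hnorm] with x hx
    exact (Integrable.of_integral_ne_zero (hx ▸ one_ne_zero)).mul_const _
  · refine hφ.integrable_sq.congr ?_
    filter_upwards [hnorm, Measure.ae_ae_of_ae_prod hp] with x hx hpx
    calc φ x ^ 2 = ∫ y, p x y * φ x ^ 2 ∂μ := by rw [integral_mul_const, hx, one_mul]
      _ = ∫ y, ‖p x y * φ x ^ 2‖ ∂μ := integral_congr_ae <| by
        filter_upwards [hpx] with y hy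
        rw [Real.norm_of_nonneg (by positivity)]

lemma integrable_kernel_mul_sq_snd (hmeas : AEStronglyMeasurable (Function.uncurry p) (μ.prod μ))
    (hsymm : ∀ x y, p x y = p y x) (hp : ∀ᵐ w ∂μ.prod μ, 0 ≤ p w.1 w.2)
    (hnorm : ∀ᵐ x ∂μ, ∫ y, p x y ∂μ = 1) (hφ : MemLp φ 2 μ) :
    Integrable (fun w : α × α => p w.1 w.2 * φ w.2 ^ 2) (μ.prod μ) := by
  convert (integrable_kernel_mul_sq_fst hmeas hp hnorm hφ).swap using 2 with w
  simp [hsymm w.1 w.2]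

lemma integrable_mul_kernel_mul_sub
    (hmeas : AEStronglyMeasurable (Function.uncurry p) (μ.prod μ))
    (hsymm : ∀ x y, p x y = p y x) (hp : ∀ᵐ w ∂μ.prod μ, 0 ≤ p w.1 w.2)
    (hnorm : ∀ᵐ x ∂μ, ∫ y, p x y ∂μ = 1) (hφ : MemLp φ 2 μ) :
    Integrable (fun w : α × α => φ w.1 * (p w.1 w.2 * (φ w.1 - φ w.2))) (μ.prod μ) := by
  refine (((integrable_kernel_mul_sq_fst hmeas hp hnorm hφ).add
    (integrable_kernel_mul_sq_snd hmeas hsymm hp hnorm hφ)).const_mul 2).mono'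
    (hφ.1.comp_fst.mul (hmeas.mul (hφ.1.comp_fst.sub hφ.1.comp_snd))) ?_
  filter_upwards [hp] with w hw
  rw [Pi.add_apply, Real.norm_eq_abs, abs_le]
  constructor <;> nlinarith [mul_nonneg hw (sq_nonneg (φ w.1 - φ w.2)),
    mul_nonneg hw (sq_nonneg (φ w.1 + φ w.2)), mul_nonneg hw (sq_nonneg (φ w.1)),
    mul_nonneg hw (sq_nonneg (φ w.2))]

theorem integral_kernel_mul_sub_sq (hmeas : AEStronglyMeasurable (Function.uncurry p) (μ.prod μ))
    (hsymm : ∀ x y, p x y = p y x) (hp : ∀ᵐ w ∂μ.prod μ, 0 ≤ p w.1 w.2)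
    (hnorm : ∀ᵐ x ∂μ, ∫ y, p x y ∂μ = 1) (hφ : MemLp φ 2 μ) :
    ∫ w, p w.1 w.2 * (φ w.1 - φ w.2) ^ 2 ∂μ.prod μ = 2 * ∫ x, φ x * scatteringOp μ p φ x ∂μ := by
  set H : α × α → ℝ := fun w => φ w.1 * (p w.1 w.2 * (φ w.1 - φ w.2))
  have hH : Integrable H (μ.prod μ) := integrable_mul_kernel_mul_sub hmeas hsymm hp hnorm hφ
  have hH_iter : ∫ w, H w ∂μ.prod μ = ∫ x, φ x * scatteringOp μ p φ x ∂μ := by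
    simp only [integral_prod H hH, H, integral_const_mul, scatteringOp]
  calc ∫ w, p w.1 w.2 * (φ w.1 - φ w.2) ^ 2 ∂μ.prod μ = ∫ w, H w + H w.swap ∂μ.prod μ :=
        integral_congr_ae (.of_forall fun w => kernel_mul_sub_sq_eq hsymm w.1 w.2)
    _ = ∫ w, H w ∂μ.prod μ + ∫ w, H w.swap ∂μ.prod μ := integral_add hH hH.swap
    _ = 2 * ∫ x, φ x * scatteringOp μ p φ x ∂μ := by rw [integral_prod_swap, hH_iter, two_mul]

theorem ae_prod_eq_of_scatteringOp_eq_zero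
    (hmeas : AEStronglyMeasurable (Function.uncurry p) (μ.prod μ))
    (hsymm : ∀ x y, p x y = p y x) (hpos : ∀ᵐ w ∂μ.prod μ, 0 < p w.1 w.2)
    (hnorm : ∀ᵐ x ∂μ, ∫ y, p x y ∂μ = 1) (hφ : MemLp φ 2 μ)
    (hker : ∀ᵐ x ∂μ, scatteringOp μ p φ x = 0) :
    ∀ᵐ w ∂μ.prod μ, φ w.1 = φ w.2 := by
  have hp : ∀ᵐ w ∂μ.prod μ, 0 ≤ p w.1 w.2 := hpos.mono fun _ h => h.le
  have hH := integrable_mul_kernel_mul_sub hmeas hsymm hp hnorm hφ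
  have hint : Integrable (fun w : α × α => p w.1 w.2 * (φ w.1 - φ w.2) ^ 2) (μ.prod μ) :=
    (hH.add hH.swap).congr (.of_forall fun w => (kernel_mul_sub_sq_eq hsymm w.1 w.2).symm)
  have hzero : ∫ w, p w.1 w.2 * (φ w.1 - φ w.2) ^ 2 ∂μ.prod μ = 0 := by
    rw [integral_kernel_mul_sub_sq hmeas hsymm hp hnorm hφ,
      integral_eq_zero_of_ae (by filter_upwards [hker] with x hx; simp [hx]), mul_zero]
  have hnonneg : 0 ≤ᵐ[μ.prod μ] fun w => p w.1 w.2 * (φ w.1 - φ w.2) ^ 2 := by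
    filter_upwards [hp] with w hw
    positivity
  filter_upwards [(integral_eq_zero_iff_of_nonneg_ae hnonneg hint).1 hzero, hpos] with w hw hpw
  simpa [hpw.ne', sub_eq_zero] using hw

end ScatteringOperator

theorem ae_eq_average_of_ae_prod_eq {α E : Type*} [MeasurableSpace α] {μ : Measure α}
    [IsFiniteMeasure μ] [NormedAddCommGroup E] [NormedSpace ℝ E] [CompleteSpace E] {f : α → E}
    (h : ∀ᵐ w ∂μ.prod μ, f w.1 = f w.2) : ∀ᵐ x ∂μ, f x = ⨍ y, f y ∂μ := by
  rcases eq_zero_or_neZero μ with rfl | _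
  · simp
  obtain ⟨x₀, hx₀⟩ := (Measure.ae_ae_of_ae_prod h).exists
  have hconst : ∀ᵐ y ∂μ, f y = f x₀ := hx₀.mono fun _ h => h.symm
  rw [average_congr hconst, average_const]
  exact hconst

/-- the kernel of `L` consists exactly of the constants:
`Lφ = 0` a.e. implies `φ` equals its mean a.e. -/
theorem stmt2 (d : ℕ) (p : Esp d → Esp d → ℝ)
    (hmeas : Measurable (Function.uncurry p))
    (hsymm : ∀ ω ω', p ω ω' = p ω' ω)
    (hpos : ∀ᵐ w ∂((sphμ d).prod (sphμ d)), 0 < p w.1 w.2)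
    (hnorm : ∀ᵐ ω ∂(sphμ d), ∫ ω', p ω ω' ∂(sphμ d) = 1)
    (φ : Esp d → ℝ) (hφ : MemLp φ 2 (sphμ d))
    (hker : ∀ᵐ ω ∂(sphμ d), ∫ ω', p ω ω' * (φ ω - φ ω') ∂(sphμ d) = 0) :
    ∀ᵐ ω ∂(sphμ d), φ ω = (∫ ω', φ ω' ∂(sphμ d)) / ((sphμ d) univ).toReal := by
  have hpair : ∀ᵐ w ∂(sphμ d).prod (sphμ d), φ w.1 = φ w.2 :=
    ae_prod_eq_of_scatteringOp_eq_zero hmeas.aestronglyMeasurable hsymm hpos hnorm hφ hker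
  simpa [average_eq, div_eq_inv_mul, measureReal_def] using ae_eq_average_of_ae_prod_eq hpair
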